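/- Assume the Setup (Section 2) with conditions (sing), (main0), (main1). Suppose that for every Hilbert space K, every unitary U on K, and every bounded X : H → K with X T = U X one has sup_{n≥0} ‖X|_{H_n}‖‖Q_n‖ < ∞. Suppose there exists a bounded X_T : H → K₀ with X_T T = U₀ X_T such that, with δ_n = inf{‖X_T x‖/‖x‖ : 0 ≠ x ∈ H_n}, one has inf_{n≥0} δ_n ‖Q_n‖ > 0. Then (X_T, U₀|_{clos(X_T H)}) is a unitary asymptote of T. -/

import Mathlib

noncomputable section
set_option linter.unusedSectionVars false
open scoped ENNReal InnerProductSpace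
open ContinuousLinearMap

/-- A bounded operator `V` is an isometry. -/
def IsIsometryOp {K : Type} [NormedAddCommGroup K] [InnerProductSpace ℂ K]
    (V : K →L[ℂ] K) : Prop :=
  ∀ x, ‖V x‖ = ‖x‖

/-- A bounded operator `V` is unitary: an isometry onto. -/
def IsUnitaryOp {K : Type} [NormedAddCommGroup K] [InnerProductSpace ℂ K]
    (V : K →L[ℂ] K) : Prop :=
  (∀ x, ‖V x‖ = ‖x‖) ∧ Function.Surjective V

/-- `(X, U)` is a unitary asymptote of `T`: `U` is unitary, `X` intertwines `T` with `U`,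
the pair is minimal (`⋁_{n ≥ 0} U^{-n} X H = K`), and it has the universal property with
respect to every pair `(Y, W)` with `W` unitary on a Hilbert space and `Y T = W Y`. -/
def IsUnitaryAsymptote {H : Type} [NormedAddCommGroup H] [InnerProductSpace ℂ H]
    [CompleteSpace H] (T : H →L[ℂ] H)
    (K : Type) [NormedAddCommGroup K] [InnerProductSpace ℂ K] [CompleteSpace K]
    (X : H →L[ℂ] K) (U : K →L[ℂ] K) : Prop :=
  IsUnitaryOp U ∧ X.comp T = U.comp X ∧
    (Submodule.span ℂ (⋃ n : ℕ, ⇑(U ^ n) ⁻¹' Set.range X)).topologicalClosure = ⊤ ∧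
    ∀ (K' : Type) [NormedAddCommGroup K'] [InnerProductSpace ℂ K'] [CompleteSpace K']
      (W : K' →L[ℂ] K') (Y : H →L[ℂ] K'), IsUnitaryOp W → Y.comp T = W.comp Y →
      ∃! Z : K →L[ℂ] K', Z.comp U = W.comp Z ∧ Y = Z.comp X

/-!
Singularity of the spectral measures drives the argument. If `Y T = W Y` with `W` unitary and
`Z_n = Y X_n⁻¹`, then `Z_k^* Z_n` intertwines `U_{0n}` with `U_{0k}` and so vanishes: `Y` maps
distinct `H_n` to orthogonal subspaces. Likewise `X_T` maps `H_n` into the summand `K_{0n}`, where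
reductivity of `U_{0n}` puts `X_T H_n` inside `U₀ (clos X_T H)`; as the `H_n` span a dense
subspace, `U₀` maps `clos X_T H` onto itself and its restriction is unitary. For the universal
property, the two bounds involving `‖Q_n‖` give `‖Y x‖ ≤ c ‖X_T x‖` on each `H_n`; Pythagoras
extends this to the span of the `H_n`, density to all of `H`, and then `Y` factors continuously
through `X_T`.
-/

theorem IsUnitaryOp.mem_unitary {K : Type} [NormedAddCommGroup K] [InnerProductSpace ℂ K]
    [CompleteSpace K] {V : K →L[ℂ] K} (hV : IsUnitaryOp V) : V ∈ unitary (K →L[ℂ] K) :=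
  (Unitary.linearIsometryEquiv.symm
    (LinearIsometryEquiv.ofSurjective ⟨(V : K →ₗ[ℂ] K), hV.1⟩ hV.2)).property

theorem isUnitaryOp_codRestrict_comp_subtypeL {K : Type} [NormedAddCommGroup K]
    [InnerProductSpace ℂ K] {V : K →L[ℂ] K} (hV : IsUnitaryOp V) {N : Submodule ℂ K}
    (hVN : ∀ y ∈ N, V y ∈ N) (hNV : ∀ y ∈ N, ∃ z ∈ N, V z = y) :
    IsUnitaryOp ((V.comp N.subtypeL).codRestrict N fun y => hVN y y.2) := by
  refine ⟨fun y => hV.1 y, fun y => ?_⟩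
  obtain ⟨z, hz, hzy⟩ := hNV y y.2
  exact ⟨⟨z, hz⟩, Subtype.ext hzy⟩

section Intertwining

variable {H E F G : Type*} [NormedAddCommGroup H] [NormedSpace ℂ H]
  [NormedAddCommGroup E] [NormedSpace ℂ E]

theorem intertwines_comp_subtypeL_comp_symm [NormedAddCommGroup G] [NormedSpace ℂ G]
    {T : H →L[ℂ] H} {M : Submodule ℂ H} (hTM : ∀ x ∈ M, T x ∈ M) {U : E →L[ℂ] E}
    (e : M ≃L[ℂ] E) (he : ∀ x : M, e ⟨T x, hTM x x.2⟩ = U (e x)) {W : G →L[ℂ] G}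
    {Y : H →L[ℂ] G} (hY : Y ∘L T = W ∘L Y) :
    (Y ∘L M.subtypeL ∘L e.symm) ∘L U = W ∘L (Y ∘L M.subtypeL ∘L e.symm) := by
  ext a
  have h : e.symm (U a) = ⟨T (e.symm a), hTM _ (e.symm a).2⟩ :=
    e.symm_apply_eq.2 (by rw [he, e.apply_symm_apply])
  simpa [h] using congr($hY (e.symm a))

variable [NormedAddCommGroup F] [InnerProductSpace ℂ F] [CompleteSpace F]
  [NormedAddCommGroup G] [InnerProductSpace ℂ G] [CompleteSpace G]

theorem adjoint_comp_intertwines {U : E →L[ℂ] E} {V : F →L[ℂ] F} {W : G →L[ℂ] G}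
    (hV : V ∈ unitary (F →L[ℂ] F)) (hW : W ∈ unitary (G →L[ℂ] G)) {A : E →L[ℂ] G}
    {B : F →L[ℂ] G} (hA : A ∘L U = W ∘L A) (hB : B ∘L V = W ∘L B) :
    (adjoint B ∘L A) ∘L U = V ∘L (adjoint B ∘L A) := by
  have hVV : V ∘L adjoint V = .id ℂ F := Unitary.mul_star_self_of_mem hV
  have hWW : adjoint W ∘L W = .id ℂ G := Unitary.star_mul_self_of_mem hW
  have hBW : adjoint B ∘L W = V ∘L adjoint B :=
    calc adjoint B ∘L W = V ∘L (adjoint V ∘L adjoint B) ∘L W := by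
          simp only [← comp_assoc, hVV, id_comp]
      _ = V ∘L (adjoint B ∘L adjoint W) ∘L W := by rw [← adjoint_comp, hB, adjoint_comp]
      _ = V ∘L adjoint B := by simp only [comp_assoc, hWW, comp_id]
  rw [comp_assoc, hA, ← comp_assoc, hBW, comp_assoc]

theorem inner_eq_zero_of_intertwines {U : E →L[ℂ] E} {V : F →L[ℂ] F} {W : G →L[ℂ] G}
    (hV : V ∈ unitary (F →L[ℂ] F)) (hW : W ∈ unitary (G →L[ℂ] G))
    (hsing : ∀ Z : E →L[ℂ] F, Z ∘L U = V ∘L Z → Z = 0) {A : E →L[ℂ] G} {B : F →L[ℂ] G}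
    (hA : A ∘L U = W ∘L A) (hB : B ∘L V = W ∘L B) (x : E) (y : F) : ⟪A x, B y⟫_ℂ = 0 := by
  rw [← adjoint_inner_left]
  change ⟪(adjoint B ∘L A) x, y⟫_ℂ = 0
  rw [hsing _ (adjoint_comp_intertwines hV hW hA hB), zero_apply, inner_zero_left]

theorem inner_map_map_eq_zero_of_singular {T : H →L[ℂ] H} {M₁ M₂ : Submodule ℂ H}
    (hTM₁ : ∀ x ∈ M₁, T x ∈ M₁) (hTM₂ : ∀ x ∈ M₂, T x ∈ M₂) {U₁ : E →L[ℂ] E} {U₂ : F →L[ℂ] F}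
    (hU₂ : U₂ ∈ unitary (F →L[ℂ] F)) (e₁ : M₁ ≃L[ℂ] E) (e₂ : M₂ ≃L[ℂ] F)
    (he₁ : ∀ x : M₁, e₁ ⟨T x, hTM₁ x x.2⟩ = U₁ (e₁ x))
    (he₂ : ∀ x : M₂, e₂ ⟨T x, hTM₂ x x.2⟩ = U₂ (e₂ x))
    (hsing : ∀ Z : E →L[ℂ] F, Z ∘L U₁ = U₂ ∘L Z → Z = 0) {W : G →L[ℂ] G}
    (hW : W ∈ unitary (G →L[ℂ] G)) {Y : H →L[ℂ] G} (hY : Y ∘L T = W ∘L Y) {x y : H}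
    (hx : x ∈ M₁) (hy : y ∈ M₂) : ⟪Y x, Y y⟫_ℂ = 0 := by
  simpa using inner_eq_zero_of_intertwines hU₂ hW hsing
    (intertwines_comp_subtypeL_comp_symm hTM₁ e₁ he₁ hY)
    (intertwines_comp_subtypeL_comp_symm hTM₂ e₂ he₂ hY) (e₁ ⟨x, hx⟩) (e₂ ⟨y, hy⟩)

end Intertwining

theorem norm_le_max_div_mul_norm_of_apply_eq_self {E F G : Type*} [NormedAddCommGroup E]
    [NormedSpace ℂ E] [SeminormedAddCommGroup F] [NormedSpace ℂ F] [SeminormedAddCommGroup G]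
    [NormedSpace ℂ G] {P : E →L[ℂ] E} {A : E →L[ℂ] F}
    {B : E →L[ℂ] G} {x : E} (hPx : P x = x) {C ε : ℝ} (hε : 0 < ε)
    (hA : ‖A x‖ * ‖P‖ ≤ C * ‖x‖) (hB : ε * ‖x‖ ≤ ‖B x‖ * ‖P‖) :
    ‖A x‖ ≤ max C 0 / ε * ‖B x‖ := by
  rcases eq_or_ne x 0 with rfl | hx
  · simp
  have hx' : 0 < ‖x‖ := norm_pos_iff.2 hx
  have hP : 0 < ‖P‖ := by
    have := P.le_opNorm x
    rw [hPx] at this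
    nlinarith
  have hA' : ‖A x‖ * ‖P‖ ≤ max C 0 * ‖x‖ := hA.trans (by gcongr; exact le_max_left C 0)
  rw [div_mul_eq_mul_div, le_div_iff₀ hε]
  refine le_of_mul_le_mul_right ?_ hP
  calc ‖A x‖ * ε * ‖P‖ = ε * (‖A x‖ * ‖P‖) := by ring
    _ ≤ ε * (max C 0 * ‖x‖) := mul_le_mul_of_nonneg_left hA' hε.le
    _ = max C 0 * (ε * ‖x‖) := by ring
    _ ≤ max C 0 * (‖B x‖ * ‖P‖) := by gcongr
    _ = max C 0 * ‖B x‖ * ‖P‖ := by ring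

theorem topologicalClosure_iSup_eq_top_of_sup_eq_top {ι R E : Type*} [Semiring R]
    [AddCommMonoid E] [Module R E] [TopologicalSpace E] [ContinuousAdd E] [ContinuousConstSMul R E]
    (M : ι → Submodule R E) (i : ι)
    (h : M i ⊔ (⨆ k ∈ {k | k ≠ i}, M k).topologicalClosure = ⊤) :
    (⨆ k, M k).topologicalClosure = ⊤ := by
  rw [eq_top_iff, ← h]
  exact sup_le ((le_iSup M i).trans (Submodule.le_topologicalClosure _))
    (Submodule.topologicalClosure_mono (iSup₂_le fun k _ => le_iSup M k))

section Domination

variable {E F G : Type*} [NormedAddCommGroup E] [NormedSpace ℂ E]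
  [NormedAddCommGroup F] [InnerProductSpace ℂ F] [NormedAddCommGroup G] [InnerProductSpace ℂ G]

theorem norm_sum_sq_eq_sum_norm_sq_of_inner_eq_zero {ι : Type*} (s : Finset ι) (v : ι → F)
    (h : ∀ i ∈ s, ∀ j ∈ s, i ≠ j → ⟪v i, v j⟫_ℂ = 0) :
    ‖∑ i ∈ s, v i‖ ^ 2 = ∑ i ∈ s, ‖v i‖ ^ 2 := by
  rw [norm_sq_eq_re_inner (𝕜 := ℂ), sum_inner, map_sum]
  refine Finset.sum_congr rfl fun i hi => ?_
  rw [inner_sum, Finset.sum_eq_single_of_mem i hi fun j hj hji => h i hi j hj hji.symm,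
    norm_sq_eq_re_inner (𝕜 := ℂ)]

theorem norm_le_mul_norm_of_topologicalClosure_iSup_eq_top {ι : Type*} {M : ι → Submodule ℂ E}
    (hM : (⨆ i, M i).topologicalClosure = ⊤) {A : E →L[ℂ] F} {B : E →L[ℂ] G}
    (hA : ∀ i j, i ≠ j → ∀ x ∈ M i, ∀ y ∈ M j, ⟪A x, A y⟫_ℂ = 0)
    (hB : ∀ i j, i ≠ j → ∀ x ∈ M i, ∀ y ∈ M j, ⟪B x, B y⟫_ℂ = 0) {c : ℝ} (hc : 0 ≤ c)
    (h : ∀ i, ∀ x ∈ M i, ‖A x‖ ≤ c * ‖B x‖) (x : E) : ‖A x‖ ≤ c * ‖B x‖ := by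
  classical
  refine (Submodule.dense_iff_topologicalClosure_eq_top.2 hM).induction (fun x hx => ?_)
    (isClosed_le (by fun_prop) (by fun_prop)) x
  obtain ⟨f, hf, rfl⟩ := (Submodule.mem_iSup_iff_exists_finsupp M x).mp hx
  rw [← pow_le_pow_iff_left₀ (norm_nonneg _) (by positivity) two_ne_zero, mul_pow,
    Finsupp.sum, map_sum, map_sum,
    norm_sum_sq_eq_sum_norm_sq_of_inner_eq_zero _ _ fun i _ j _ hij => hA i j hij _ (hf i) _ (hf j),
    norm_sum_sq_eq_sum_norm_sq_of_inner_eq_zero _ _ fun i _ j _ hij => hB i j hij _ (hf i) _ (hf j),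
    Finset.mul_sum]
  gcongr with i
  rw [← mul_pow]
  exact pow_le_pow_left₀ (norm_nonneg _) (h i _ (hf i)) 2

end Domination

namespace ContinuousLinearMap

variable {E F : Type*} [NormedAddCommGroup E] [NormedSpace ℂ E]
  [NormedAddCommGroup F] [NormedSpace ℂ F]

abbrev rangeClosure (X : E →L[ℂ] F) : Submodule ℂ F :=
  (LinearMap.range (X : E →ₗ[ℂ] F)).topologicalClosure

theorem apply_mem_rangeClosure (X : E →L[ℂ] F) (x : E) : X x ∈ X.rangeClosure :=
  Submodule.le_topologicalClosure _ (LinearMap.mem_range_self _ x)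

abbrev toRangeClosure (X : E →L[ℂ] F) : E →L[ℂ] X.rangeClosure :=
  X.codRestrict _ X.apply_mem_rangeClosure

theorem isClosed_rangeClosure (X : E →L[ℂ] F) : IsClosed (X.rangeClosure : Set F) :=
  Submodule.isClosed_topologicalClosure _

theorem denseRange_toRangeClosure (X : E →L[ℂ] F) : DenseRange X.toRangeClosure := by
  refine Topology.IsInducing.subtypeVal.dense_iff.2 fun y => ?_
  rw [← Set.range_comp]
  exact y.2

theorem ext_of_comp_toRangeClosure {G : Type*} [NormedAddCommGroup G] [NormedSpace ℂ G]
    {X : E →L[ℂ] F} {Z₁ Z₂ : X.rangeClosure →L[ℂ] G}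
    (h : Z₁ ∘L X.toRangeClosure = Z₂ ∘L X.toRangeClosure) : Z₁ = Z₂ :=
  DFunLike.coe_injective <| X.denseRange_toRangeClosure.equalizer Z₁.continuous Z₂.continuous <|
    congrArg (⇑) h

theorem mapsTo_rangeClosure {T : E →L[ℂ] E} {U : F →L[ℂ] F} {X : E →L[ℂ] F}
    (hX : X ∘L T = U ∘L X) : ∀ y ∈ X.rangeClosure, U y ∈ X.rangeClosure := by
  refine Submodule.topologicalClosure_minimal (t := X.rangeClosure.comap (U : F →ₗ[ℂ] F)) _ ?_
    (X.isClosed_rangeClosure.preimage U.continuous)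
  rintro _ ⟨x, rfl⟩
  change U (X x) ∈ X.rangeClosure
  rw [← comp_apply U X, ← hX]
  exact X.apply_mem_rangeClosure (T x)

end ContinuousLinearMap

theorem isUnitaryAsymptote_toRangeClosure {H K : Type} [NormedAddCommGroup H]
    [InnerProductSpace ℂ H] [CompleteSpace H] [NormedAddCommGroup K] [InnerProductSpace ℂ K]
    [CompleteSpace K] {T : H →L[ℂ] H} {U : K →L[ℂ] K} (hU : IsUnitaryOp U) {X : H →L[ℂ] K}
    (hX : X ∘L T = U ∘L X) (hsurj : ∀ y ∈ X.rangeClosure, ∃ z ∈ X.rangeClosure, U z = y)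
    (hdom : ∀ (K' : Type) [NormedAddCommGroup K'] [InnerProductSpace ℂ K'] [CompleteSpace K']
      (W : K' →L[ℂ] K') (Y : H →L[ℂ] K'), IsUnitaryOp W → Y ∘L T = W ∘L Y →
      ∃ c : ℝ, ∀ x, ‖Y x‖ ≤ c * ‖X x‖) :
    IsUnitaryAsymptote T X.rangeClosure X.toRangeClosure
      ((U ∘L X.rangeClosure.subtypeL).codRestrict _ fun y => mapsTo_rangeClosure hX y y.2) := by
  set U' := (U ∘L X.rangeClosure.subtypeL).codRestrict _ fun y => mapsTo_rangeClosure hX y y.2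
  have hUX : U' ∘L X.toRangeClosure = X.toRangeClosure ∘L T := by
    ext x
    exact congr($hX x).symm
  refine ⟨isUnitaryOp_codRestrict_comp_subtypeL hU _ hsurj, hUX.symm, ?_, ?_⟩
  · rw [← Submodule.dense_iff_topologicalClosure_eq_top]
    refine X.denseRange_toRangeClosure.mono ?_
    rintro _ ⟨x, rfl⟩
    exact Submodule.subset_span (Set.mem_iUnion.2 ⟨0, x, by simp⟩)
  · intro K' _ _ _ W Y hW hY
    obtain ⟨c, hc⟩ := hdom K' W Y hW hY
    set Z := (Y : H →ₗ[ℂ] K').extendOfNorm (X.toRangeClosure : H →ₗ[ℂ] X.rangeClosure)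
    have hZX : Y = Z ∘L X.toRangeClosure := ext fun x =>
      (LinearMap.extendOfNorm_eq X.denseRange_toRangeClosure ⟨c, hc⟩ x).symm
    refine ⟨Z, ⟨ext_of_comp_toRangeClosure ?_, hZX⟩,
      fun Z' hZ' => ext_of_comp_toRangeClosure (hZ'.2.symm.trans hZX)⟩
    rw [comp_assoc, hUX, ← comp_assoc, ← hZX, hY, comp_assoc, ← hZX]

section HilbertSum

variable {ι : Type*} [DecidableEq ι] {K0 : ι → Type*} [∀ i, NormedAddCommGroup (K0 i)]

theorem apply_lpSingle_of_coordinatewise [∀ i, NormedSpace ℂ (K0 i)]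
    {U0 : ∀ i, K0 i →L[ℂ] K0 i} {Uz : lp K0 2 →L[ℂ] lp K0 2}
    (hUz : ∀ (a : lp K0 2) i, (Uz a : ∀ i, K0 i) i = U0 i (a i)) (i : ι) (b : K0 i) :
    Uz (lp.single 2 i b) = lp.single 2 i (U0 i b) := by
  ext j
  rw [hUz]
  rcases eq_or_ne j i with rfl | hj
  · simp only [lp.single_apply_self]
  · simp only [lp.single_apply_ne _ _ _ hj, map_zero]

theorem lpSingle_apply_self_of_mem [∀ i, NormedSpace ℂ (K0 i)] {H : Type*}
    [NormedAddCommGroup H] [NormedSpace ℂ H] {T : H →L[ℂ] H} {U0 : ∀ i, K0 i →L[ℂ] K0 i}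
    {Uz : lp K0 2 →L[ℂ] lp K0 2} (hUz : ∀ (a : lp K0 2) i, (Uz a : ∀ i, K0 i) i = U0 i (a i))
    {XT : H →L[ℂ] lp K0 2} (hXT : XT ∘L T = Uz ∘L XT) {i : ι}
    (hsing : ∀ j, j ≠ i → ∀ Z : K0 i →L[ℂ] K0 j, Z ∘L U0 i = U0 j ∘L Z → Z = 0)
    {M : Submodule ℂ H} (hTM : ∀ x ∈ M, T x ∈ M) (e : M ≃L[ℂ] K0 i)
    (he : ∀ x : M, e ⟨T x, hTM x x.2⟩ = U0 i (e x)) {x : H} (hx : x ∈ M) :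
    lp.single 2 i ((XT x : ∀ i, K0 i) i) = XT x := by
  ext j
  rcases eq_or_ne j i with rfl | hj
  · rw [lp.single_apply_self]
  rw [lp.single_apply_ne _ _ _ hj]
  have hZ := hsing j hj _ (intertwines_comp_subtypeL_comp_symm hTM e he
    (Y := lp.evalCLM ℂ K0 2 j ∘L XT) (W := U0 j) (by ext y; exact congr($hXT y j).trans (hUz _ j)))
  simpa [lp.evalCLM] using congr($hZ (e ⟨x, hx⟩)).symm

variable [∀ i, InnerProductSpace ℂ (K0 i)] [∀ i, CompleteSpace (K0 i)]
  {U0 : ∀ i, K0 i →L[ℂ] K0 i} {Uz : lp K0 2 →L[ℂ] lp K0 2}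

theorem exists_mem_apply_eq_lpSingle_of_reductive
    (hUz : ∀ (a : lp K0 2) i, (Uz a : ∀ i, K0 i) i = U0 i (a i)) {i : ι}
    (hU0 : U0 i ∈ unitary (K0 i →L[ℂ] K0 i))
    (hred : ∀ F : Submodule ℂ (K0 i), IsClosed (F : Set (K0 i)) →
      (∀ x ∈ F, U0 i x ∈ F) → ∀ x ∈ F, adjoint (U0 i) x ∈ F)
    {N : Submodule ℂ (lp K0 2)} (hN : IsClosed (N : Set (lp K0 2))) (hUzN : ∀ y ∈ N, Uz y ∈ N)
    {b : K0 i} (hb : lp.single 2 i b ∈ N) : ∃ z ∈ N, Uz z = lp.single 2 i b := by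
  let S := lp.singleContinuousLinearMap ℂ K0 2 i
  have hF := hred (N.comap (S : K0 i →ₗ[ℂ] lp K0 2)) (hN.preimage S.continuous) fun c hc => by
    simpa [S, apply_lpSingle_of_coordinatewise hUz] using hUzN _ hc
  refine ⟨lp.single 2 i (adjoint (U0 i) b), hF b hb, ?_⟩
  rw [apply_lpSingle_of_coordinatewise hUz]
  exact congr(lp.single 2 i ($(Unitary.mul_star_self_of_mem hU0) b))

theorem exists_mem_rangeClosure_apply_eq {H : Type*} [NormedAddCommGroup H] [NormedSpace ℂ H]
    {T : H →L[ℂ] H} (hU0 : ∀ i, U0 i ∈ unitary (K0 i →L[ℂ] K0 i))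
    (hred : ∀ i (F : Submodule ℂ (K0 i)), IsClosed (F : Set (K0 i)) →
      (∀ x ∈ F, U0 i x ∈ F) → ∀ x ∈ F, adjoint (U0 i) x ∈ F)
    (hsing : ∀ i j, i ≠ j → ∀ Z : K0 i →L[ℂ] K0 j, Z ∘L U0 i = U0 j ∘L Z → Z = 0)
    (hUzn : ∀ a, ‖Uz a‖ = ‖a‖) (hUz : ∀ (a : lp K0 2) i, (Uz a : ∀ i, K0 i) i = U0 i (a i))
    {XT : H →L[ℂ] lp K0 2} (hXT : XT ∘L T = Uz ∘L XT) {M : ι → Submodule ℂ H}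
    (hM : (⨆ i, M i).topologicalClosure = ⊤) (hTM : ∀ i, ∀ x ∈ M i, T x ∈ M i)
    (e : ∀ i, M i ≃L[ℂ] K0 i) (he : ∀ i (x : M i), e i ⟨T x, hTM i x x.2⟩ = U0 i (e i x)) :
    ∀ y ∈ XT.rangeClosure, ∃ z ∈ XT.rangeClosure, Uz z = y := by
  let G := XT.rangeClosure.map (Uz : lp K0 2 →ₗ[ℂ] lp K0 2)
  have hG : IsClosed (G : Set (lp K0 2)) :=
    (AddMonoidHomClass.isometry_of_norm Uz hUzn).isClosedEmbedding.isClosedMap _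
      XT.isClosed_rangeClosure
  have hMG : ⨆ i, M i ≤ G.comap (XT : H →ₗ[ℂ] lp K0 2) := iSup_le fun i x hx => by
    have hsingle := lpSingle_apply_self_of_mem hUz hXT (fun j hj => hsing i j hj.symm) (hTM i)
      (e i) (he i) hx
    change XT x ∈ G
    rw [← hsingle]
    exact exists_mem_apply_eq_lpSingle_of_reductive hUz (hU0 i) (hred i)
      XT.isClosed_rangeClosure (mapsTo_rangeClosure hXT)
      (by rw [hsingle]; exact XT.apply_mem_rangeClosure x)
  have hXG : ∀ x, XT x ∈ G := by
    have := Submodule.topologicalClosure_minimal _ hMG (hG.preimage XT.continuous)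
    rw [hM, top_le_iff] at this
    exact Submodule.eq_top_iff'.1 this
  intro y hy
  exact Submodule.mem_map.1 <| Submodule.topologicalClosure_minimal _
    (by rintro _ ⟨x, rfl⟩; exact hXG x) hG hy

end HilbertSum

theorem canonical_intertwining_is_unitary_asymptote_general
    {H : Type} [NormedAddCommGroup H] [InnerProductSpace ℂ H] [CompleteSpace H]
    (K0 : ℕ → Type) [∀ n, NormedAddCommGroup (K0 n)] [∀ n, InnerProductSpace ℂ (K0 n)]
    [∀ n, CompleteSpace (K0 n)]
    -- the unitaries `U_{0n}`, each reductive, with pairwise singular spectral measures: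
    (U0 : ∀ n, K0 n →L[ℂ] K0 n)
    (hU0 : ∀ n, IsUnitaryOp (U0 n))
    (hU0red : ∀ (n) (F : Submodule ℂ (K0 n)), IsClosed (F : Set (K0 n)) →
      (∀ x ∈ F, U0 n x ∈ F) → ∀ x ∈ F, ContinuousLinearMap.adjoint (U0 n) x ∈ F)
    (hsing : ∀ n k, n ≠ k → ∀ Z : K0 n →L[ℂ] K0 k, Z.comp (U0 n) = (U0 k).comp Z → Z = 0)
    (T : H →L[ℂ] H)
    -- the nonzero closed `T`-invariant subspaces `H_n`:
    (Hn : ℕ → Submodule ℂ H)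
    (hTH : ∀ n, ∀ x ∈ Hn n, T x ∈ Hn n)
    -- `Vn n = ⋁_{k ≠ n} H_k`:
    (Vn : ℕ → Submodule ℂ H)
    (hVn : ∀ n, Vn n = (⨆ k ∈ {k : ℕ | k ≠ n}, Hn k).topologicalClosure)
    -- (main0):
    (hmain0 : ∀ n, Hn n ⊓ Vn n = ⊥ ∧ Hn n ⊔ Vn n = ⊤)
    -- (main1): the invertible intertwiners `X_n : H_n → K_{0n}`:
    (X0 : ∀ n, ↥(Hn n) ≃L[ℂ] K0 n)
    (hX0 : ∀ (n) (x : ↥(Hn n)), X0 n ⟨T ↑x, hTH n ↑x x.2⟩ = U0 n (X0 n x))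
    -- the skew projections `Q_n` onto `H_n` along `⋁_{k ≠ n} H_k`:
    (Q : ℕ → H →L[ℂ] H)
    (hQid : ∀ n, ∀ x ∈ Hn n, Q n x = x)
    -- `U₀ = ⊕_n U_{0n}` acting on the Hilbert direct sum `K₀ = ⊕_n K_{0n} = lp K0 2`:
    (Uz : lp K0 2 →L[ℂ] lp K0 2) (hUzU : IsUnitaryOp Uz)
    (hUz : ∀ (a : lp K0 2) (n : ℕ), (Uz a : ∀ i, K0 i) n = U0 n (a n))
    -- (xxnqqn) for every intertwining with a unitary:
    (hbound : ∀ (K' : Type) [NormedAddCommGroup K'] [InnerProductSpace ℂ K'] [CompleteSpace K']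
      (W : K' →L[ℂ] K') (X : H →L[ℂ] K'), IsUnitaryOp W → X.comp T = W.comp X →
      ∃ C : ℝ, ∀ n, ∀ x ∈ Hn n, ‖X x‖ * ‖Q n‖ ≤ C * ‖x‖)
    -- the candidate canonical intertwining map `X_T`:
    (XT : H →L[ℂ] lp K0 2) (hXT : XT.comp T = Uz.comp XT)
    (hlow : ∃ ε : ℝ, 0 < ε ∧ ∀ n, ∀ x ∈ Hn n, ε * ‖x‖ ≤ ‖XT x‖ * ‖Q n‖) :
    letI N := (LinearMap.range (↑XT : H →ₗ[ℂ] lp K0 2)).topologicalClosure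
    haveI : CompleteSpace ↥N := (Submodule.isClosed_topologicalClosure _).completeSpace_coe
    ∃ (hr : ∀ x : H, XT x ∈ N) (hinv : ∀ y ∈ N, Uz y ∈ N),
      IsUnitaryAsymptote T ↥N (XT.codRestrict N hr)
        ((Uz.comp N.subtypeL).codRestrict N fun y => hinv ↑y y.2) := by
  obtain ⟨ε, hε, hXTlow⟩ := hlow
  have hdense : (⨆ n, Hn n).topologicalClosure = ⊤ :=
    topologicalClosure_iSup_eq_top_of_sup_eq_top Hn 0 (hVn 0 ▸ (hmain0 0).2)
  have horth : ∀ (K' : Type) [NormedAddCommGroup K'] [InnerProductSpace ℂ K'] [CompleteSpace K']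
      (W : K' →L[ℂ] K') (Y : H →L[ℂ] K'), IsUnitaryOp W → Y ∘L T = W ∘L Y →
      ∀ n k, n ≠ k → ∀ x ∈ Hn n, ∀ y ∈ Hn k, ⟪Y x, Y y⟫_ℂ = 0 :=
    fun K' _ _ _ W Y hW hY n k hnk x hx y hy => inner_map_map_eq_zero_of_singular (hTH n) (hTH k)
      (hU0 k).mem_unitary (X0 n) (X0 k) (hX0 n) (hX0 k) (hsing n k hnk) hW.mem_unitary hY hx hy
  refine ⟨XT.apply_mem_rangeClosure, mapsTo_rangeClosure hXT,
    isUnitaryAsymptote_toRangeClosure hUzU hXT ?_ fun K' _ _ _ W Y hW hY => ?_⟩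
  · exact exists_mem_rangeClosure_apply_eq (fun n => (hU0 n).mem_unitary) hU0red hsing hUzU.1
      hUz hXT hdense hTH X0 hX0
  · obtain ⟨C, hC⟩ := hbound K' W Y hW hY
    exact ⟨max C 0 / ε, norm_le_mul_norm_of_topologicalClosure_iSup_eq_top hdense
      (horth K' W Y hW hY) (horth _ Uz XT hUzU hXT) (by positivity) fun n x hx =>
        norm_le_max_div_mul_norm_of_apply_eq_self (hQid n x hx) hε (hC n x hx) (hXTlow n x hx)⟩

/-- Theorem 2.5: sufficient conditions for `(X_T, U₀|_{clos X_T H})` to be a unitary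
asymptote of `T`. -/
theorem canonical_intertwining_is_unitary_asymptote
    {H : Type} [NormedAddCommGroup H] [InnerProductSpace ℂ H] [CompleteSpace H]
    [TopologicalSpace.SeparableSpace H]
    (K0 : ℕ → Type) [∀ n, NormedAddCommGroup (K0 n)] [∀ n, InnerProductSpace ℂ (K0 n)]
    [∀ n, CompleteSpace (K0 n)] [∀ n, TopologicalSpace.SeparableSpace (K0 n)]
    -- the unitaries `U_{0n}`, each reductive, with pairwise singular spectral measures:
    (U0 : ∀ n, K0 n →L[ℂ] K0 n)
    (hU0 : ∀ n, IsUnitaryOp (U0 n))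
    (hU0red : ∀ (n) (F : Submodule ℂ (K0 n)), IsClosed (F : Set (K0 n)) →
      (∀ x ∈ F, U0 n x ∈ F) → ∀ x ∈ F, ContinuousLinearMap.adjoint (U0 n) x ∈ F)
    (hsing : ∀ n k, n ≠ k → ∀ Z : K0 n →L[ℂ] K0 k, Z.comp (U0 n) = (U0 k).comp Z → Z = 0)
    (T : H →L[ℂ] H)
    -- the nonzero closed `T`-invariant subspaces `H_n`:
    (Hn : ℕ → Submodule ℂ H)
    (hHcl : ∀ n, IsClosed ((Hn n : Set H)))
    (hHne : ∀ n, Hn n ≠ ⊥)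
    (hTH : ∀ n, ∀ x ∈ Hn n, T x ∈ Hn n)
    -- `Vn n = ⋁_{k ≠ n} H_k`:
    (Vn : ℕ → Submodule ℂ H)
    (hVn : ∀ n, Vn n = (⨆ k ∈ {k : ℕ | k ≠ n}, Hn k).topologicalClosure)
    -- (main0):
    (hmain0 : ∀ n, Hn n ⊓ Vn n = ⊥ ∧ Hn n ⊔ Vn n = ⊤)
    -- (main1): the invertible intertwiners `X_n : H_n → K_{0n}`:
    (X0 : ∀ n, ↥(Hn n) ≃L[ℂ] K0 n)
    (hX0 : ∀ (n) (x : ↥(Hn n)), X0 n ⟨T ↑x, hTH n ↑x x.2⟩ = U0 n (X0 n x))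
    -- the skew projections `Q_n` onto `H_n` along `⋁_{k ≠ n} H_k`:
    (Q : ℕ → H →L[ℂ] H)
    (hQmem : ∀ n x, Q n x ∈ Hn n)
    (hQid : ∀ n, ∀ x ∈ Hn n, Q n x = x)
    (hQker : ∀ n, ∀ x ∈ Vn n, Q n x = 0)
    -- `U₀ = ⊕_n U_{0n}` acting on the Hilbert direct sum `K₀ = ⊕_n K_{0n} = lp K0 2`:
    (Uz : lp K0 2 →L[ℂ] lp K0 2) (hUzU : IsUnitaryOp Uz)
    (hUz : ∀ (a : lp K0 2) (n : ℕ), (Uz a : ∀ i, K0 i) n = U0 n (a n))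
    -- (xxnqqn) for every intertwining with a unitary:
    (hbound : ∀ (K' : Type) [NormedAddCommGroup K'] [InnerProductSpace ℂ K'] [CompleteSpace K']
      (W : K' →L[ℂ] K') (X : H →L[ℂ] K'), IsUnitaryOp W → X.comp T = W.comp X →
      ∃ C : ℝ, ∀ n, ∀ x ∈ Hn n, ‖X x‖ * ‖Q n‖ ≤ C * ‖x‖)
    -- the candidate canonical intertwining map `X_T`:
    (XT : H →L[ℂ] lp K0 2) (hXT : XT.comp T = Uz.comp XT)
    (hlow : ∃ ε : ℝ, 0 < ε ∧ ∀ n, ∀ x ∈ Hn n, ε * ‖x‖ ≤ ‖XT x‖ * ‖Q n‖) :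
    letI N := (LinearMap.range (↑XT : H →ₗ[ℂ] lp K0 2)).topologicalClosure
    haveI : CompleteSpace ↥N := (Submodule.isClosed_topologicalClosure _).completeSpace_coe
    ∃ (hr : ∀ x : H, XT x ∈ N) (hinv : ∀ y ∈ N, Uz y ∈ N),
      IsUnitaryAsymptote T ↥N (XT.codRestrict N hr)
        ((Uz.comp N.subtypeL).codRestrict N fun y => hinv ↑y y.2) :=
  canonical_intertwining_is_unitary_asymptote_general K0 U0 hU0 hU0red hsing T Hn hTH Vn hVn hmain0
    X0 hX0 Q hQid Uz hUzU hUz hbound XT hXT hlow
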